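/- Let L(x) = (1/6) e^{-x} + e^{-x/2} ( (1/6) cos(√3 x / 2) + (√3/6) sin(√3 x / 2) ) for x ≥ 0, the equivalent kernel for smoothing splines with m = 3. Then L(|·|) is a sixth-order kernel: ∫_ℝ L(|t|) dt = 1, ∫_ℝ t² L(|t|) dt = 0, and ∫_ℝ t⁴ L(|t|) dt = 0. -/

import Mathlib

/-!
With `ζ = e^{iπ/3}` (so `ζ⁻¹ = ζ̄`), the kernel is `L(t) = Re (e^{-t} + 2 ζ⁻¹ e^{-ζ⁻¹ t}) / 6`
for `t ≥ 0`. Since `∫₀^∞ tⁿ e^{-ct} dt = n! / cⁿ⁺¹` for `Re c > 0`, the `n`-th moment of `L` on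
the half-line is `n! (1 + 2 Re ζⁿ) / 6`, and for even `n` the moment of `L(|·|)` on `ℝ` is twice
that. Finally `Re ζ⁰ = 1`, while `ζ² = ζ - 1` and `ζ⁴ = -ζ` have real part `-1/2`.
-/

open MeasureTheory

noncomputable section

/-- The equivalent kernel for smoothing splines with `m = 3`:
`L(x) = (1/6) e^{-x} + e^{-x/2} ((1/6) cos(√3 x / 2) + (√3/6) sin(√3 x / 2))`. -/
def L3ker (x : ℝ) : ℝ :=
  (1 / 6) * Real.exp (-x) +
    Real.exp (-x / 2) *
      ((1 / 6) * Real.cos (Real.sqrt 3 * x / 2) +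
        (Real.sqrt 3 / 6) * Real.sin (Real.sqrt 3 * x / 2))

open Set Filter Topology Complex Nat

section ExpMoments

variable {c : ℂ}

lemma integrableOn_Ioi_pow_mul_cexp_neg_mul (hc : 0 < c.re) (n : ℕ) :
    IntegrableOn (fun t : ℝ ↦ (t : ℂ) ^ n * cexp (-(c * t))) (Ioi 0) := by
  have hreal : IntegrableOn (fun t : ℝ ↦ t ^ (n : ℝ) * Real.exp (-c.re * t ^ (1 : ℝ))) (Ioi 0) :=
    integrableOn_rpow_mul_exp_neg_mul_rpow (by linarith [n.cast_nonneg (α := ℝ)]) one_pos hc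
  refine hreal.mono' (by fun_prop) ?_
  filter_upwards [ae_restrict_mem measurableSet_Ioi] with t (ht : 0 < t)
  simp [norm_exp, abs_of_pos ht, Real.rpow_natCast]

lemma tendsto_pow_mul_cexp_neg_mul_atTop (hc : 0 < c.re) (n : ℕ) :
    Tendsto (fun t : ℝ ↦ (t : ℂ) ^ n * cexp (-(c * t))) atTop (𝓝 0) := by
  refine squeeze_zero_norm' ?_ (tendsto_rpow_mul_exp_neg_mul_atTop_nhds_zero n c.re hc)
  filter_upwards [eventually_gt_atTop 0] with t ht
  simp [norm_exp, abs_of_pos ht, Real.rpow_natCast]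

lemma hasDerivAt_cexp_neg_mul (t : ℝ) :
    HasDerivAt (fun t : ℝ ↦ cexp (-(c * t))) (-c * cexp (-(c * t))) t := by
  simpa [mul_comm] using ((ofRealCLM.hasDerivAt (x := t)).const_mul c).neg.cexp

lemma hasDerivAt_pow_mul_cexp_neg_mul (n : ℕ) (t : ℝ) :
    HasDerivAt (fun t : ℝ ↦ (t : ℂ) ^ (n + 1) * cexp (-(c * t)))
      ((n + 1) * ((t : ℂ) ^ n * cexp (-(c * t))) - c * ((t : ℂ) ^ (n + 1) * cexp (-(c * t)))) t := by
  have hpow : HasDerivAt (fun t : ℝ ↦ (t : ℂ) ^ (n + 1)) ((n + 1) * (t : ℂ) ^ n) t := by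
    simpa using (hasDerivAt_pow (n + 1) (t : ℂ)).comp_ofReal
  exact (hpow.mul (hasDerivAt_cexp_neg_mul t)).congr_deriv (by ring)

theorem integral_Ioi_pow_mul_cexp_neg_mul (hc : 0 < c.re) (n : ℕ) :
    ∫ t in Ioi (0 : ℝ), (t : ℂ) ^ n * cexp (-(c * t)) = n ! / c ^ (n + 1) := by
  have hc0 : c ≠ 0 := by rintro rfl; simp at hc
  induction n with
  | zero =>
    have hderiv (t : ℝ) : HasDerivAt (fun t : ℝ ↦ -c⁻¹ * cexp (-(c * t))) (cexp (-(c * t))) t :=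
      ((hasDerivAt_cexp_neg_mul t).const_mul (-c⁻¹)).congr_deriv (by field_simp)
    have := integral_Ioi_of_hasDerivAt_of_tendsto' (fun t _ ↦ hderiv t)
      (by simpa using integrableOn_Ioi_pow_mul_cexp_neg_mul hc 0)
      (by simpa using (tendsto_pow_mul_cexp_neg_mul_atTop hc 0).const_mul (-c⁻¹))
    simpa using this
  | succ n ih =>
    have hint₁ := (integrableOn_Ioi_pow_mul_cexp_neg_mul hc n).const_mul ((n : ℂ) + 1)
    have hint₂ := (integrableOn_Ioi_pow_mul_cexp_neg_mul hc (n + 1)).const_mul c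
    have hparts := integral_Ioi_of_hasDerivAt_of_tendsto'
      (fun t _ ↦ hasDerivAt_pow_mul_cexp_neg_mul n t) (hint₁.sub hint₂)
      (tendsto_pow_mul_cexp_neg_mul_atTop hc (n + 1))
    rw [integral_sub hint₁ hint₂, integral_const_mul, integral_const_mul, ih] at hparts
    simp only [ofReal_zero, zero_pow n.succ_ne_zero, zero_mul, zero_sub] at hparts
    rw [eq_div_iff (pow_ne_zero _ hc0)]
    push_cast [factorial_succ]
    field_simp at hparts
    linear_combination -hparts

lemma pow_mul_re_mul (n : ℕ) (t : ℝ) (a z : ℂ) : t ^ n * (a * z).re = (a * ((t : ℂ) ^ n * z)).re := by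
  rw [mul_left_comm, ← ofReal_pow, re_ofReal_mul]

lemma integrableOn_Ioi_pow_mul_re_cexp_neg_mul (hc : 0 < c.re) (n : ℕ) (a : ℂ) :
    IntegrableOn (fun t : ℝ ↦ t ^ n * (a * cexp (-(c * t))).re) (Ioi 0) := by
  simp_rw [pow_mul_re_mul]
  exact ((integrableOn_Ioi_pow_mul_cexp_neg_mul hc n).const_mul a).re

theorem integral_Ioi_pow_mul_re_cexp_neg_mul (hc : 0 < c.re) (n : ℕ) (a : ℂ) :
    ∫ t in Ioi (0 : ℝ), t ^ n * (a * cexp (-(c * t))).re = (a * n ! / c ^ (n + 1)).re := by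
  calc ∫ t in Ioi (0 : ℝ), t ^ n * (a * cexp (-(c * t))).re
      = (∫ t in Ioi (0 : ℝ), a * ((t : ℂ) ^ n * cexp (-(c * t)))).re := by
        simp_rw [pow_mul_re_mul]
        exact integral_re ((integrableOn_Ioi_pow_mul_cexp_neg_mul hc n).const_mul a)
    _ = (a * n ! / c ^ (n + 1)).re := by
        rw [integral_const_mul, integral_Ioi_pow_mul_cexp_neg_mul hc, mul_div_assoc]

end ExpMoments

def ζ₆ : ℂ := (1 + √3 * I) / 2

lemma ofReal_sqrt_three_sq : ((√3 : ℝ) : ℂ) ^ 2 = 3 := by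
  rw [← ofReal_pow, Real.sq_sqrt (by norm_num)]
  norm_num

lemma ζ₆_sq : ζ₆ ^ 2 = ζ₆ - 1 := by
  unfold ζ₆
  linear_combination (I ^ 2 / 4) * ofReal_sqrt_three_sq + (3 / 4) * I_sq

lemma ζ₆_inv : ζ₆⁻¹ = (1 - √3 * I) / 2 := by
  refine inv_eq_of_mul_eq_one_right ?_
  unfold ζ₆
  linear_combination (-I ^ 2 / 4) * ofReal_sqrt_three_sq - (3 / 4) * I_sq

lemma re_ζ₆ : ζ₆.re = 1 / 2 := by simp [ζ₆]

lemma re_ζ₆_inv_pos : 0 < ζ₆⁻¹.re := by simp [ζ₆_inv]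

-- The factor `1 * t` puts the first term in the same shape as the second.
lemma L3ker_eq_re (t : ℝ) :
    L3ker t = ((1 / 6 : ℂ) * cexp (-(1 * t))).re + (ζ₆⁻¹ / 3 * cexp (-(ζ₆⁻¹ * t))).re := by
  rw [ζ₆_inv, L3ker]
  simp only [mul_re, mul_im, exp_re, exp_im, neg_re, neg_im, sub_re, sub_im, div_ofNat_re,
    div_ofNat_im, one_re, one_im, I_re, I_im, ofReal_re, ofReal_im, mul_zero, zero_mul, sub_zero,
    add_zero, neg_zero, Real.cos_zero, Real.sin_zero]
  ring_nf

lemma integral_Ioi_pow_mul_L3ker (n : ℕ) :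
    ∫ t in Ioi (0 : ℝ), t ^ n * L3ker t = n ! * (1 + 2 * (ζ₆ ^ n).re) / 6 := by
  have one_re_pos : 0 < (1 : ℂ).re := by simp
  simp_rw [L3ker_eq_re, mul_add]
  rw [integral_add (integrableOn_Ioi_pow_mul_re_cexp_neg_mul one_re_pos n _)
      (integrableOn_Ioi_pow_mul_re_cexp_neg_mul re_ζ₆_inv_pos n _),
    integral_Ioi_pow_mul_re_cexp_neg_mul one_re_pos, integral_Ioi_pow_mul_re_cexp_neg_mul re_ζ₆_inv_pos]
  have hζ : ζ₆ ≠ 0 := by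
    intro h
    simpa [h] using re_ζ₆
  have h₁ : (1 / 6 : ℂ) * n ! / 1 ^ (n + 1) = ((n ! / 6 : ℝ) : ℂ) := by push_cast; ring
  have h₂ : ζ₆⁻¹ / 3 * n ! / ζ₆⁻¹ ^ (n + 1) = ((n ! / 3 : ℝ) : ℂ) * ζ₆ ^ n := by
    rw [inv_pow, div_inv_eq_mul, pow_succ]
    push_cast
    field_simp
  rw [h₁, h₂, ofReal_re, re_ofReal_mul]
  ring

lemma integral_pow_mul_L3ker_abs {n : ℕ} (hn : Even n) :
    ∫ t, t ^ n * L3ker |t| = n ! * (1 + 2 * (ζ₆ ^ n).re) / 3 := by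
  have habs : (fun t : ℝ ↦ t ^ n * L3ker |t|) = fun t ↦ |t| ^ n * L3ker |t| := by
    simp [hn.pow_abs]
  rw [habs, integral_comp_abs (f := fun t ↦ t ^ n * L3ker t), integral_Ioi_pow_mul_L3ker]
  ring

lemma re_ζ₆_sq : (ζ₆ ^ 2).re = -1 / 2 := by
  rw [ζ₆_sq, sub_re, re_ζ₆, one_re]
  norm_num

lemma re_ζ₆_pow_four : (ζ₆ ^ 4).re = -1 / 2 := by
  rw [show ζ₆ ^ 4 = -ζ₆ by linear_combination (ζ₆ ^ 2 + ζ₆) * ζ₆_sq, neg_re, re_ζ₆]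
  norm_num

/-- `L(|·|)` is a sixth-order kernel:
`∫ℝ L(|t|) dt = 1`, `∫ℝ t² L(|t|) dt = 0`, and `∫ℝ t⁴ L(|t|) dt = 0`. -/
theorem L3ker_sixth_order_kernel :
    (∫ t : ℝ, L3ker |t|) = 1 ∧ (∫ t : ℝ, t ^ 2 * L3ker |t|) = 0 ∧
      (∫ t : ℝ, t ^ 4 * L3ker |t|) = 0 := by
  refine ⟨?_, ?_, ?_⟩
  · simpa using (integral_pow_mul_L3ker_abs Even.zero).trans (by norm_num)
  · rw [integral_pow_mul_L3ker_abs (by decide), re_ζ₆_sq]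
    norm_num
  · rw [integral_pow_mul_L3ker_abs (by decide), re_ζ₆_pow_four]
    norm_num

end
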